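/- Let X and Y be separable metric spaces, k_x and k_y bounded continuous symmetric positive semidefinite kernels on X and Y respectively, and k_xy the product kernel k_xy((x,y),(x',y')) := k_x(x,x')·k_y(y,y'). Then for all finite signed Borel measures P, P̂ on X and Q, Q̂ on Y: √(E_{k_xy}(P̂ ⊗ Q̂ − P ⊗ Q)) ≤ √(E_{k_x}(P))·√(E_{k_y}(Q̂ − Q)) + √(E_{k_y}(Q))·√(E_{k_x}(P̂ − P)) + √(E_{k_x}(P̂ − P))·√(E_{k_y}(Q̂ − Q)). -/

import Mathlib

open MeasureTheory Filter Topology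

/-- Integral of a real-valued function against a finite signed measure,
defined via the Jordan decomposition. -/
noncomputable def sintegral {X : Type*} [MeasurableSpace X]
    (ν : SignedMeasure X) (g : X → ℝ) : ℝ :=
  (∫ x, g x ∂ν.toJordanDecomposition.posPart) -
    (∫ x, g x ∂ν.toJordanDecomposition.negPart)

/-- The kernel energy `E_k(ν) = ∬ k(x,x') dν(x) dν(x')` of a finite signed measure. -/
noncomputable def energy {X : Type*} [MeasurableSpace X]
    (k : X × X → ℝ) (ν : SignedMeasure X) : ℝ :=
  sintegral ν fun x => sintegral ν fun y => k (x, y)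

/-- The product `μ ⊗ ν` of two finite signed measures, defined via the Jordan
decompositions: `(μ⁺⊗ν⁺ + μ⁻⊗ν⁻) − (μ⁺⊗ν⁻ + μ⁻⊗ν⁺)`. -/
noncomputable def sprod {X Y : Type*} [MeasurableSpace X] [MeasurableSpace Y]
    (μ : SignedMeasure X) (ν : SignedMeasure Y) : SignedMeasure (X × Y) :=
  ((μ.toJordanDecomposition.posPart.prod ν.toJordanDecomposition.posPart).toSignedMeasure +
      (μ.toJordanDecomposition.negPart.prod ν.toJordanDecomposition.negPart).toSignedMeasure) -
    ((μ.toJordanDecomposition.posPart.prod ν.toJordanDecomposition.negPart).toSignedMeasure +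
      (μ.toJordanDecomposition.negPart.prod ν.toJordanDecomposition.posPart).toSignedMeasure)

/-!
Write `⟪s, t⟫ := ∬ k(x, y) ds(x) dt(y)`, so that the energy is `⟪s, s⟫`. This is a bilinear
form on finite signed measures, symmetric by Fubini, and for the product kernel it factors:
`⟪s ⊗ t, s' ⊗ t'⟫ = ⟪s, s'⟫ ⟪t, t'⟫`. It is positive semidefinite: replacing `k` by
`k (T x, T y)` for a simple function `T` turns the energy into a finite sum
`∑ c_i c_j k(x_i, x_j) ≥ 0`, and for simple functions converging pointwise to the identity
dominated convergence recovers the energy of `k`.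

With `P̂ = P + D` and `Q̂ = Q + E`, expanding `⟪P̂ ⊗ Q̂ - P ⊗ Q, P̂ ⊗ Q̂ - P ⊗ Q⟫` gives the
squared norm of `P ⊗ E + D ⊗ Q + D ⊗ E`, whose cross terms `⟪D, P⟫`, `⟪E, Q⟫` are bounded by
Cauchy–Schwarz; this is the square of the right-hand side.
-/

section SignedIntegral

variable {X : Type*} [MeasurableSpace X] {g h : X → ℝ} {C D : ℝ}

lemma integrable_of_abs_le {μ : Measure X} [IsFiniteMeasure μ] (hg : Measurable g)
    (hC : ∀ x, |g x| ≤ C) : Integrable g μ :=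
  .of_bound hg.aestronglyMeasurable C (.of_forall hC)

lemma sintegral_eq_integral_sub_integral {s : SignedMeasure X} {μ ν : Measure X}
    [IsFiniteMeasure μ] [IsFiniteMeasure ν] (hs : s = μ.toSignedMeasure - ν.toSignedMeasure)
    (hg : Measurable g) (hC : ∀ x, |g x| ≤ C) :
    sintegral s g = ∫ x, g x ∂μ - ∫ x, g x ∂ν := by
  have hJ : s.toJordanDecomposition.posPart + ν = μ + s.toJordanDecomposition.negPart := by
    rw [← Measure.toSignedMeasure_eq_toSignedMeasure_iff, Measure.toSignedMeasure_add,
      Measure.toSignedMeasure_add, ← sub_eq_sub_iff_add_eq_add, ← hs]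
    exact s.toSignedMeasure_toJordanDecomposition
  have hJint := congrArg (fun μ => ∫ x, g x ∂μ) hJ
  simp only [integral_add_measure (integrable_of_abs_le hg hC) (integrable_of_abs_le hg hC)]
    at hJint
  rw [sintegral]
  linarith

lemma sintegral_toSignedMeasure (μ : Measure X) [IsFiniteMeasure μ] (hg : Measurable g)
    (hC : ∀ x, |g x| ≤ C) : sintegral μ.toSignedMeasure g = ∫ x, g x ∂μ := by
  rw [sintegral_eq_integral_sub_integral (μ := μ) (ν := 0) (by simp) hg hC,
    integral_zero_measure, sub_zero]

lemma sintegral_add_measure (s t : SignedMeasure X) (hg : Measurable g) (hC : ∀ x, |g x| ≤ C) :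
    sintegral (s + t) g = sintegral s g + sintegral t g := by
  have hst : s + t =
      (s.toJordanDecomposition.posPart + t.toJordanDecomposition.posPart).toSignedMeasure -
        (s.toJordanDecomposition.negPart + t.toJordanDecomposition.negPart).toSignedMeasure := by
    rw [Measure.toSignedMeasure_add, Measure.toSignedMeasure_add]
    conv_lhs => rw [← s.toSignedMeasure_toJordanDecomposition,
      ← t.toSignedMeasure_toJordanDecomposition]
    simp only [JordanDecomposition.toSignedMeasure]
    abel
  rw [sintegral_eq_integral_sub_integral hst hg hC,
    integral_add_measure (integrable_of_abs_le hg hC) (integrable_of_abs_le hg hC),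
    integral_add_measure (integrable_of_abs_le hg hC) (integrable_of_abs_le hg hC), sintegral,
    sintegral]
  ring

lemma sintegral_smul_measure (r : ℝ) (s : SignedMeasure X) :
    sintegral (r • s) g = r * sintegral s g := by
  simp only [sintegral, SignedMeasure.toJordanDecomposition_smul_real]
  rcases le_or_gt 0 r with hr | hr
  · rw [JordanDecomposition.real_smul_posPart_nonneg _ _ hr,
      JordanDecomposition.real_smul_negPart_nonneg _ _ hr, integral_smul_nnreal_measure,
      integral_smul_nnreal_measure, NNReal.smul_def, NNReal.smul_def, Real.coe_toNNReal _ hr]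
    simp only [smul_eq_mul]
    ring
  · rw [JordanDecomposition.real_smul_posPart_neg _ _ hr,
      JordanDecomposition.real_smul_negPart_neg _ _ hr, integral_smul_nnreal_measure,
      integral_smul_nnreal_measure, NNReal.smul_def, NNReal.smul_def,
      Real.coe_toNNReal _ (neg_nonneg.2 hr.le)]
    simp only [smul_eq_mul]
    ring

lemma sintegral_add (s : SignedMeasure X) (hg : Measurable g) (hC : ∀ x, |g x| ≤ C)
    (hh : Measurable h) (hD : ∀ x, |h x| ≤ D) :
    sintegral s (fun x => g x + h x) = sintegral s g + sintegral s h := by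
  simp only [sintegral,
    integral_add (integrable_of_abs_le hg hC) (integrable_of_abs_le hh hD)]
  ring

lemma sintegral_const_mul (s : SignedMeasure X) (r : ℝ) :
    sintegral s (fun x => r * g x) = r * sintegral s g := by
  simp only [sintegral, integral_const_mul]
  ring

lemma abs_sintegral_le (s : SignedMeasure X) (hC : ∀ x, |g x| ≤ C) :
    |sintegral s g| ≤ C * s.totalVariation.real Set.univ := by
  have hbound (μ : Measure X) [IsFiniteMeasure μ] : |∫ x, g x ∂μ| ≤ C * μ.real Set.univ := by
    simpa [mul_comm] using norm_integral_le_of_norm_le_const (μ := μ) (f := g) (C := C)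
      (.of_forall hC)
  rw [SignedMeasure.totalVariation, measureReal_add_apply, mul_add]
  exact (abs_sub _ _).trans (add_le_add (hbound _) (hbound _))

lemma measurable_sintegral_prodMk_left {k : X × X → ℝ} (hk : Measurable k)
    (t : SignedMeasure X) : Measurable fun x => sintegral t fun y => k (x, y) :=
  hk.stronglyMeasurable.integral_prod_right'.measurable.sub
    hk.stronglyMeasurable.integral_prod_right'.measurable

end SignedIntegral

section EnergyForm

variable {X : Type*} [MeasurableSpace X] {M : ℝ}

/-- `energyForm k s t` is the inner product `⟪μ_s, μ_t⟫` of the kernel mean embeddings. -/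
noncomputable def energyForm (k : X × X → ℝ) (hk : Measurable k) (hM : ∀ p, |k p| ≤ M) :
    LinearMap.BilinForm ℝ (SignedMeasure X) :=
  LinearMap.mk₂ ℝ (fun s t => sintegral s fun x => sintegral t fun y => k (x, y))
    (fun s s' t => sintegral_add_measure s s' (measurable_sintegral_prodMk_left hk t)
      fun x => abs_sintegral_le t fun y => hM (x, y))
    (fun r s _ => sintegral_smul_measure r s)
    (fun s t t' => by
      have hx (x : X) : sintegral (t + t') (fun y => k (x, y)) =
          sintegral t (fun y => k (x, y)) + sintegral t' (fun y => k (x, y)) :=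
        sintegral_add_measure t t' (hk.comp measurable_prodMk_left) fun y => hM (x, y)
      simp only [hx]
      exact sintegral_add s (measurable_sintegral_prodMk_left hk t)
        (fun x => abs_sintegral_le t fun y => hM (x, y)) (measurable_sintegral_prodMk_left hk t')
        (fun x => abs_sintegral_le t' fun y => hM (x, y)))
    (fun r s t => by
      simp only [sintegral_smul_measure, smul_eq_mul]
      exact sintegral_const_mul s r)

variable {k : X × X → ℝ} (hk : Measurable k) (hM : ∀ p, |k p| ≤ M)

lemma energyForm_toSignedMeasure (μ ν : Measure X) [IsFiniteMeasure μ] [IsFiniteMeasure ν] :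
    energyForm k hk hM μ.toSignedMeasure ν.toSignedMeasure = ∫ x, ∫ y, k (x, y) ∂ν ∂μ := by
  have hν (x : X) : sintegral ν.toSignedMeasure (fun y => k (x, y)) = ∫ y, k (x, y) ∂ν :=
    sintegral_toSignedMeasure ν (hk.comp measurable_prodMk_left) fun y => hM (x, y)
  simp only [energyForm, LinearMap.mk₂_apply, hν]
  exact sintegral_toSignedMeasure μ hk.stronglyMeasurable.integral_prod_right'.measurable
    fun x => by rw [← hν x]; exact abs_sintegral_le _ fun y => hM (x, y)

lemma isSymm_energyForm (hsymm : ∀ a b, k (a, b) = k (b, a)) :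
    (energyForm k hk hM).IsSymm := by
  have hswap (μ ν : Measure X) [IsFiniteMeasure μ] [IsFiniteMeasure ν] :
      ∫ x, ∫ y, k (x, y) ∂ν ∂μ = ∫ x, ∫ y, k (x, y) ∂μ ∂ν := by
    rw [integral_integral_swap (f := fun x y => k (x, y)) (integrable_of_abs_le hk hM)]
    simp only [hsymm]
  refine ⟨fun s t => ?_⟩
  rw [← s.toSignedMeasure_toJordanDecomposition, ← t.toSignedMeasure_toJordanDecomposition]
  simp only [JordanDecomposition.toSignedMeasure, map_sub, LinearMap.sub_apply,
    energyForm_toSignedMeasure hk hM, hswap s.toJordanDecomposition.posPart,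
    hswap s.toJordanDecomposition.negPart]
  ring

end EnergyForm

section Product

variable {X Y : Type*}

def kernelProd (kx : X × X → ℝ) (ky : Y × Y → ℝ) : (X × Y) × (X × Y) → ℝ :=
  fun p => kx (p.1.1, p.2.1) * ky (p.1.2, p.2.2)

variable {kx : X × X → ℝ} {ky : Y × Y → ℝ} {Mx My : ℝ}

lemma abs_kernelProd_le (hMx : ∀ p, |kx p| ≤ Mx) (hMy : ∀ p, |ky p| ≤ My)
    (p : (X × Y) × (X × Y)) :
    |kernelProd kx ky p| ≤ Mx * My := by
  rw [kernelProd, abs_mul]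
  exact mul_le_mul (hMx _) (hMy _) (abs_nonneg _) ((abs_nonneg _).trans (hMx (p.1.1, p.2.1)))

variable [MeasurableSpace X] [MeasurableSpace Y]

lemma Measurable.kernelProd (hkx : Measurable kx) (hky : Measurable ky) :
    Measurable (kernelProd kx ky) := by
  unfold _root_.kernelProd
  fun_prop

lemma sintegral_sprod (s : SignedMeasure X) (t : SignedMeasure Y) {F : X → ℝ} {G : Y → ℝ}
    {C D : ℝ} (hF : Measurable F) (hC : ∀ x, |F x| ≤ C) (hG : Measurable G)
    (hD : ∀ y, |G y| ≤ D) :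
    sintegral (sprod s t) (fun p => F p.1 * G p.2) = sintegral s F * sintegral t G := by
  have hFG : Measurable fun p : X × Y => F p.1 * G p.2 :=
    (hF.comp measurable_fst).mul (hG.comp measurable_snd)
  have hCD (p : X × Y) : |F p.1 * G p.2| ≤ C * D := by
    rw [abs_mul]
    exact mul_le_mul (hC _) (hD _) (abs_nonneg _) ((abs_nonneg _).trans (hC p.1))
  have hint {μ : Measure (X × Y)} [IsFiniteMeasure μ] := integrable_of_abs_le (μ := μ) hFG hCD
  have hst : sprod s t =
      (s.toJordanDecomposition.posPart.prod t.toJordanDecomposition.posPart +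
        s.toJordanDecomposition.negPart.prod t.toJordanDecomposition.negPart).toSignedMeasure -
      (s.toJordanDecomposition.posPart.prod t.toJordanDecomposition.negPart +
        s.toJordanDecomposition.negPart.prod t.toJordanDecomposition.posPart).toSignedMeasure := by
    simp only [sprod, Measure.toSignedMeasure_add]
  rw [sintegral_eq_integral_sub_integral hst hFG hCD, integral_add_measure hint hint,
    integral_add_measure hint hint]
  simp only [integral_prod_mul, sintegral]
  ring

lemma energyForm_kernelProd_sprod (hkx : Measurable kx) (hMx : ∀ p, |kx p| ≤ Mx)
    (hky : Measurable ky) (hMy : ∀ p, |ky p| ≤ My) (s s' : SignedMeasure X)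
    (t t' : SignedMeasure Y) :
    energyForm (kernelProd kx ky) (hkx.kernelProd hky) (abs_kernelProd_le hMx hMy)
        (sprod s t) (sprod s' t') =
      energyForm kx hkx hMx s s' * energyForm ky hky hMy t t' := by
  have hinner (p : X × Y) :
      sintegral (sprod s' t') (fun q => kernelProd kx ky (p, q)) =
        sintegral s' (fun x => kx (p.1, x)) * sintegral t' (fun y => ky (p.2, y)) :=
    sintegral_sprod (F := fun x => kx (p.1, x)) (G := fun y => ky (p.2, y)) s' t'
      (hkx.comp measurable_prodMk_left) (fun _ => hMx _)
      (hky.comp measurable_prodMk_left) (fun _ => hMy _)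
  simp only [energyForm, LinearMap.mk₂_apply, hinner]
  exact sintegral_sprod s t (measurable_sintegral_prodMk_left hkx s')
    (fun x => abs_sintegral_le s' fun _ => hMx _) (measurable_sintegral_prodMk_left hky t')
    (fun y => abs_sintegral_le t' fun _ => hMy _)

end Product

section Nonneg

variable {X Y : Type*} [MeasurableSpace X]

lemma integral_comp_simpleFunc (T : SimpleFunc X Y) (g : Y → ℝ) (μ : Measure X)
    [IsFiniteMeasure μ] :
    ∫ x, g (T x) ∂μ = ∑ y ∈ T.range, μ.real (T ⁻¹' {y}) * g y := by
  have hsum (x : X) : g (T x) = ∑ y ∈ T.range, (T ⁻¹' {y}).indicator (fun _ => g y) x := by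
    rw [Finset.sum_eq_single_of_mem (T x) (T.mem_range_self x)]
    · simp
    · intro y _ hy
      simp [Ne.symm hy]
  simp only [hsum]
  rw [integral_finsetSum _ fun y _ => (integrable_const (g y)).indicator (T.measurableSet_fiber y)]
  simp only [integral_indicator_const _ (T.measurableSet_fiber _), smul_eq_mul]

lemma sintegral_comp_simpleFunc (s : SignedMeasure X) (T : SimpleFunc X Y) (g : Y → ℝ) :
    sintegral s (fun x => g (T x)) = ∑ y ∈ T.range, s (T ⁻¹' {y}) * g y := by
  simp only [sintegral, integral_comp_simpleFunc,
    s.apply_eq_posPart_real_sub_negPart_real (T.measurableSet_fiber _), sub_mul,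
    Finset.sum_sub_distrib]

lemma energy_comp_simpleFunc (k : Y × Y → ℝ) (T : SimpleFunc X Y) (s : SignedMeasure X) :
    energy (fun p => k (T p.1, T p.2)) s =
      ∑ y ∈ T.range, ∑ y' ∈ T.range, s (T ⁻¹' {y}) * s (T ⁻¹' {y'}) * k (y, y') := by
  have hinner (x : X) : sintegral s (fun x' => k (T x, T x')) =
      ∑ y' ∈ T.range, s (T ⁻¹' {y'}) * k (T x, y') :=
    sintegral_comp_simpleFunc s T fun y' => k (T x, y')
  rw [energy]
  simp only [hinner]
  rw [sintegral_comp_simpleFunc s T fun y => ∑ y' ∈ T.range, s (T ⁻¹' {y'}) * k (y, y')]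
  simp only [Finset.mul_sum, mul_assoc]

lemma sum_sum_mul_nonneg_of_psd {k : Y × Y → ℝ}
    (hpsd : ∀ (m : ℕ) (y : Fin m → Y) (c : Fin m → ℝ), 0 ≤ ∑ i, ∑ j, c i * c j * k (y i, y j))
    (S : Finset Y) (c : Y → ℝ) : 0 ≤ ∑ y ∈ S, ∑ y' ∈ S, c y * c y' * k (y, y') := by
  have hsum (f : Y → ℝ) : ∑ y ∈ S, f y = ∑ i, f (S.equivFin.symm i) := by
    rw [← S.sum_coe_sort, ← S.equivFin.symm.sum_comp]
  simpa only [hsum] using hpsd S.card (fun i => S.equivFin.symm i) fun i => c (S.equivFin.symm i)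

lemma tendsto_sintegral_of_tendsto (s : SignedMeasure X) {g : ℕ → X → ℝ} {g₀ : X → ℝ} {C : ℝ}
    (hg : ∀ n, Measurable (g n)) (hC : ∀ n x, |g n x| ≤ C)
    (hlim : ∀ x, Tendsto (fun n => g n x) atTop (𝓝 (g₀ x))) :
    Tendsto (fun n => sintegral s (g n)) atTop (𝓝 (sintegral s g₀)) := by
  have hdom (μ : Measure X) [IsFiniteMeasure μ] :
      Tendsto (fun n => ∫ x, g n x ∂μ) atTop (𝓝 (∫ x, g₀ x ∂μ)) :=
    tendsto_integral_of_dominated_convergence (fun _ => C) (fun n => (hg n).aestronglyMeasurable)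
      (integrable_const C) (fun n => .of_forall (hC n)) (.of_forall hlim)
  exact (hdom _).sub (hdom _)

lemma tendsto_energy_comp [TopologicalSpace X] {k : X × X → ℝ} {M : ℝ} (hk : Continuous k)
    (hkm : Measurable k) (hM : ∀ p, |k p| ≤ M) {T : ℕ → X → X} (hT : ∀ n, Measurable (T n))
    (hlim : ∀ x, Tendsto (fun n => T n x) atTop (𝓝 x)) (s : SignedMeasure X) :
    Tendsto (fun n => energy (fun p => k (T n p.1, T n p.2)) s) atTop (𝓝 (energy k s)) := by
  have hinner (x : X) : Tendsto (fun n => sintegral s fun y => k (T n x, T n y)) atTop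
      (𝓝 (sintegral s fun y => k (x, y))) :=
    tendsto_sintegral_of_tendsto s (fun n => hkm.comp (measurable_const.prodMk (hT n)))
      (fun _ _ => hM _) fun y => (hk.tendsto _).comp ((hlim x).prodMk_nhds (hlim y))
  exact tendsto_sintegral_of_tendsto s
    (fun n => measurable_sintegral_prodMk_left (hkm.comp ((hT n).prodMap (hT n))) s)
    (fun _ _ => abs_sintegral_le s fun _ => hM _) hinner

theorem energy_nonneg [PseudoEMetricSpace X] [SecondCountableTopology X]
    [OpensMeasurableSpace X] {k : X × X → ℝ} {M : ℝ} (hk : Continuous k)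
    (hM : ∀ p, |k p| ≤ M)
    (hpsd : ∀ (m : ℕ) (x : Fin m → X) (c : Fin m → ℝ), 0 ≤ ∑ i, ∑ j, c i * c j * k (x i, x j))
    (s : SignedMeasure X) : 0 ≤ energy k s := by
  rcases isEmpty_or_nonempty X with hX | ⟨⟨x₀⟩⟩
  · simp [energy, sintegral, integral_of_isEmpty]
  let T n := SimpleFunc.approxOn id measurable_id Set.univ x₀ (Set.mem_univ x₀) n
  refine ge_of_tendsto' (tendsto_energy_comp hk hk.measurable hM (fun n => (T n).measurable)
    (fun x => SimpleFunc.tendsto_approxOn measurable_id (Set.mem_univ x₀) (by simp)) s) fun n => ?_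
  rw [energy_comp_simpleFunc]
  exact sum_sum_mul_nonneg_of_psd hpsd _ _

end Nonneg

lemma isPosSemidef_energyForm {X : Type*} [PseudoEMetricSpace X] [SecondCountableTopology X]
    [MeasurableSpace X] [OpensMeasurableSpace X] {k : X × X → ℝ} {M : ℝ} (hk : Continuous k)
    (hM : ∀ p, |k p| ≤ M) (hsymm : ∀ a b, k (a, b) = k (b, a))
    (hpsd : ∀ (m : ℕ) (x : Fin m → X) (c : Fin m → ℝ), 0 ≤ ∑ i, ∑ j, c i * c j * k (x i, x j)) :
    (energyForm k hk.measurable hM).IsPosSemidef where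
  isSymm := isSymm_energyForm hk.measurable hM hsymm
  nonneg := energy_nonneg hk hM hpsd

namespace LinearMap.BilinForm

variable {M N L : Type*} [AddCommGroup M] [Module ℝ M] [AddCommGroup N] [Module ℝ N]
  [AddCommGroup L] [Module ℝ L]

lemma abs_apply_le_sqrt_mul_sqrt {B : LinearMap.BilinForm ℝ M} (hB : B.IsPosSemidef) (x y : M) :
    |B x y| ≤ √(B x x) * √(B y y) := by
  rw [← Real.sqrt_mul (hB.nonneg x), ← Real.sqrt_sq_eq_abs]
  exact Real.sqrt_le_sqrt (B.apply_sq_le_of_symm hB.nonneg (isSymm_iff.1 hB.isSymm) x y)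

theorem sqrt_apply_tmul_sub_tmul_le {Bx : LinearMap.BilinForm ℝ M} {By : LinearMap.BilinForm ℝ N}
    {Bxy : LinearMap.BilinForm ℝ L} (hBx : Bx.IsPosSemidef) (hBy : By.IsPosSemidef)
    (tmul : M → N → L)
    (htmul : ∀ m m' n n', Bxy (tmul m n) (tmul m' n') = Bx m m' * By n n')
    (m m' : M) (n n' : N) :
    √(Bxy (tmul m' n' - tmul m n) (tmul m' n' - tmul m n)) ≤
      √(Bx m m) * √(By (n' - n) (n' - n)) + √(By n n) * √(Bx (m' - m) (m' - m)) +
        √(Bx (m' - m) (m' - m)) * √(By (n' - n) (n' - n)) := by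
  obtain ⟨d, rfl⟩ : ∃ d, m' = m + d := ⟨m' - m, by abel⟩
  obtain ⟨e, rfl⟩ : ∃ e, n' = n + e := ⟨n' - n, by abel⟩
  simp only [add_sub_cancel_left]
  have hx := abs_le.1 (abs_apply_le_sqrt_mul_sqrt hBx d m)
  have hy := abs_le.1 (abs_apply_le_sqrt_mul_sqrt hBy e n)
  have hexpand : Bxy (tmul (m + d) (n + e) - tmul m n) (tmul (m + d) (n + e) - tmul m n) =
      Bx m m * By e e + Bx d d * By n n + Bx d d * By e e + 2 * Bx d m * By e n +
        2 * Bx d m * By e e + 2 * Bx d d * By e n := by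
    simp only [map_sub, LinearMap.sub_apply, htmul, map_add, LinearMap.add_apply,
      hBx.isSymm.eq m d, hBy.isSymm.eq n e]
    ring
  rw [hexpand]
  refine Real.sqrt_le_iff.2 ⟨by positivity, ?_⟩
  nlinarith [Real.sq_sqrt (hBx.nonneg m), Real.sq_sqrt (hBx.nonneg d), Real.sq_sqrt (hBy.nonneg n),
    Real.sq_sqrt (hBy.nonneg e), Real.sqrt_nonneg (Bx m m), Real.sqrt_nonneg (Bx d d),
    Real.sqrt_nonneg (By n n), Real.sqrt_nonneg (By e e)]

end LinearMap.BilinForm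

/-- Appendix B inequality (proof of Lemma 3): for tensor-product embeddings under a
product kernel,
`‖μ̂_{(X,Y)} − μ_{(X,Y)}‖ ≤ ‖μ_X‖·‖μ̂_Y − μ_Y‖ + ‖μ_Y‖·‖μ̂_X − μ_X‖ + ‖μ̂_X − μ_X‖·‖μ̂_Y − μ_Y‖`,
stated with RKHS norms expressed as square roots of kernel energies. -/
theorem sqrt_energy_sprod_sub_sprod_le
    {X Y : Type*}
    [MetricSpace X] [TopologicalSpace.SeparableSpace X] [MeasurableSpace X] [BorelSpace X]
    [MetricSpace Y] [TopologicalSpace.SeparableSpace Y] [MeasurableSpace Y] [BorelSpace Y]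
    (kx : X × X → ℝ) (hkx_bdd : ∃ M, ∀ p, |kx p| ≤ M) (hkx_cont : Continuous kx)
    (hkx_symm : ∀ a b, kx (a, b) = kx (b, a))
    (hkx_psd : ∀ (m : ℕ) (x : Fin m → X) (c : Fin m → ℝ),
      0 ≤ ∑ i, ∑ j, c i * c j * kx (x i, x j))
    (ky : Y × Y → ℝ) (hky_bdd : ∃ M, ∀ p, |ky p| ≤ M) (hky_cont : Continuous ky)
    (hky_symm : ∀ a b, ky (a, b) = ky (b, a))
    (hky_psd : ∀ (m : ℕ) (y : Fin m → Y) (c : Fin m → ℝ),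
      0 ≤ ∑ i, ∑ j, c i * c j * ky (y i, y j))
    (P Phat : SignedMeasure X) (Q Qhat : SignedMeasure Y) :
    Real.sqrt (energy
        (fun p : (X × Y) × (X × Y) => kx (p.1.1, p.2.1) * ky (p.1.2, p.2.2))
        (sprod Phat Qhat - sprod P Q))
      ≤ Real.sqrt (energy kx P) * Real.sqrt (energy ky (Qhat - Q))
        + Real.sqrt (energy ky Q) * Real.sqrt (energy kx (Phat - P))
        + Real.sqrt (energy kx (Phat - P)) * Real.sqrt (energy ky (Qhat - Q)) := by
  have := UniformSpace.secondCountable_of_separable X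
  have := UniformSpace.secondCountable_of_separable Y
  obtain ⟨Mx, hMx⟩ := hkx_bdd
  obtain ⟨My, hMy⟩ := hky_bdd
  exact LinearMap.BilinForm.sqrt_apply_tmul_sub_tmul_le
    (isPosSemidef_energyForm hkx_cont hMx hkx_symm hkx_psd)
    (isPosSemidef_energyForm hky_cont hMy hky_symm hky_psd) sprod
    (energyForm_kernelProd_sprod hkx_cont.measurable hMx hky_cont.measurable hMy) P Phat Q Qhat
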